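/- Let X = {1,…,6}, let X′ = {1′,…,6′} be a disjoint copy of X, and let S be the set of 2-element subsets of X. Let Ω_X be the simple graph on the 27-element vertex set X ⊔ X′ ⊔ S whose adjacencies are exactly: x ∈ X adjacent to y′ ∈ X′ iff x ≠ y; x ∈ X adjacent to s ∈ S iff x ∈ s; x′ ∈ X′ adjacent to s ∈ S iff x ∈ s; s₁, s₂ ∈ S adjacent iff s₁ ∩ s₂ = ∅ (in particular, no edges within X and no edges within X′). Then the graph Ω is isomorphic to Ω_X as a simple graph. -/

import Mathlib

open scoped TensorProduct

/-- The lattice `L = ℤ⁷` with standard basis `ℓ, e₁, …, e₆`. -/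
abbrev L : Type := Fin 7 → ℤ

/-- The symmetric bilinear form `B(x,y) = x₀y₀ − x₁y₁ − ⋯ − x₆y₆`. -/
def B (x y : L) : ℤ :=
  x 0 * y 0 - (x 1 * y 1 + x 2 * y 2 + x 3 * y 3 + x 4 * y 4 + x 5 * y 5 + x 6 * y 6)

/-- `h = 3ℓ − e₁ − ⋯ − e₆`, the hyperplane class, with `B(h,h) = 3`. -/
def hv : L := ![3, -1, -1, -1, -1, -1, -1]

/-- The set of lines: `Y = {y ∈ L : B(h,y) = 1 ∧ B(y,y) = −1}`. -/
def Yset : Set L := {y | B hv y = 1 ∧ B y y = -1}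

/-- The set of roots: `R = {α ∈ L : B(h,α) = 0 ∧ B(α,α) = −2}`. -/
def Rset : Set L := {a | B hv a = 0 ∧ B a a = -2}

lemma B_comm (x y : L) : B x y = B y x := by unfold B; ring

/-- The graph `Ω` on the 27 lines: distinct `y, y′` adjacent iff `B(y,y′) = 1`. -/
def Ω : SimpleGraph ↥Yset where
  Adj a b := a ≠ b ∧ B a.1 b.1 = 1
  symm := by
    constructor
    rintro a b ⟨hne, hB⟩
    exact ⟨hne.symm, by rw [B_comm]; exact hB⟩
  loopless := by constructor; rintro a ⟨hne, _⟩; exact hne rfl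

/-- The vertex set of Schläfli's combinatorial graph: `X ⊔ X′ ⊔ S`, where
`X = {1,…,6}`, `X′` is a disjoint copy of `X`, and `S` is the set of 2-element subsets
of `X`. -/
abbrev VX : Type := Fin 6 ⊕ Fin 6 ⊕ {s : Finset (Fin 6) // s.card = 2}

/-- The adjacency relation of the combinatorial graph `Ω_X`. -/
def AdjX : VX → VX → Prop
  | Sum.inl _, Sum.inl _ => False
  | Sum.inl x, Sum.inr (Sum.inl y) => x ≠ y
  | Sum.inl x, Sum.inr (Sum.inr s) => x ∈ s.1
  | Sum.inr (Sum.inl x), Sum.inl y => x ≠ y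
  | Sum.inr (Sum.inl _), Sum.inr (Sum.inl _) => False
  | Sum.inr (Sum.inl x), Sum.inr (Sum.inr s) => x ∈ s.1
  | Sum.inr (Sum.inr s), Sum.inl x => x ∈ s.1
  | Sum.inr (Sum.inr s), Sum.inr (Sum.inl x) => x ∈ s.1
  | Sum.inr (Sum.inr s), Sum.inr (Sum.inr t) => s.1 ∩ t.1 = ∅

/-- Schläfli's combinatorial graph `Ω_X` on 27 vertices. -/
def ΩX : SimpleGraph VX where
  Adj := AdjX
  symm := by
    constructor
    rintro (x | x | s) (y | y | t) h
    · exact h.elim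
    · exact Ne.symm h
    · exact h
    · exact Ne.symm h
    · exact h.elim
    · exact h
    · exact h
    · exact h
    · show t.1 ∩ s.1 = ∅
      rw [Finset.inter_comm]
      exact h
  loopless := by
    constructor
    rintro (x | x | s) h
    · exact h.elim
    · exact h.elim
    · have h' : s.1 ∩ s.1 = ∅ := h
      rw [Finset.inter_self] at h'
      have h2 := s.2
      rw [h', Finset.card_empty] at h2
      exact absurd h2 (by norm_num)

/-!
Write a lattice vector as `dℓ + ∑ mᵢeᵢ`. It is a line iff `3d + ∑ mᵢ = 1` and
`∑ mᵢ² = d² + 1`. Cauchy–Schwarz leaves only `d ∈ {0, 1, 2}`, and then `∑ mᵢ(mᵢ − 1) = 0`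
(for `d = 0`) or `∑ mᵢ(mᵢ + 1) = 0` (for `d = 1, 2`) forces `m` to be `±` the indicator of a set
of size `1`, `2` or `5`. So the lines are exactly the 27 classes `aᵢ`, `c_{ij}`, `bᵢ`, and
their Gram matrix, computed directly, is `−1` on the diagonal and the adjacency matrix of `Ω_X`
off it.
-/

instance : DecidableRel AdjX := fun (u v : VX) => by
  rcases u with x | x | s <;> rcases v with y | y | t <;> dsimp only [AdjX] <;> infer_instance

/-- `aᵢ = eᵢ`, `bᵢ = 2ℓ − ∑ⱼ eⱼ + eᵢ` and `c_{ij} = ℓ − eᵢ − eⱼ`. -/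
def line : VX → L
  | Sum.inl i => Fin.cons 0 fun j => if j = i then 1 else 0
  | Sum.inr (Sum.inl i) => Fin.cons 2 fun j => if j = i then 0 else -1
  | Sum.inr (Sum.inr s) => Fin.cons 1 fun j => if j ∈ s.1 then -1 else 0

theorem B_line_line : ∀ u v : VX,
    B (line u) (line v) = if u = v then -1 else if AdjX u v then 1 else 0 := by
  decide

theorem B_hv_line : ∀ u : VX, B hv (line u) = 1 := by
  decide

theorem line_mem_Yset (u : VX) : line u ∈ Yset :=
  ⟨B_hv_line u, by simpa using B_line_line u u⟩

theorem line_injective : Function.Injective line := by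
  intro u v huv
  by_contra hne
  have h := B_line_line u v
  rw [huv, B_line_line v v, if_pos rfl, if_neg hne] at h
  split_ifs at h

theorem B_cons (a b : ℤ) (m n : Fin 6 → ℤ) :
    B (Fin.cons a m) (Fin.cons b n) = a * b - ∑ i, m i * n i := by
  rw [Fin.sum_univ_six]
  rfl

theorem hv_eq_cons : hv = Fin.cons 3 fun _ => -1 := by
  ext i
  fin_cases i <;> rfl

theorem cons_mem_Yset_iff {d : ℤ} {m : Fin 6 → ℤ} :
    (Fin.cons d m : L) ∈ Yset ↔ 3 * d + ∑ i, m i = 1 ∧ ∑ i, m i ^ 2 = d ^ 2 + 1 := by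
  change B _ _ = 1 ∧ B _ _ = -1 ↔ _
  rw [hv_eq_cons, B_cons, B_cons]
  simp only [neg_one_mul, Finset.sum_neg_distrib, sub_neg_eq_add, sq]
  constructor <;> rintro ⟨h₁, h₂⟩ <;> constructor <;> linarith

theorem Int.mul_sub_one_nonneg (k : ℤ) : 0 ≤ k * (k - 1) := by
  rcases le_or_gt k 0 with h | h <;> nlinarith

theorem exists_eq_indicator_of_sum_mul_sub_one_eq_zero {ι : Type*} [Fintype ι] [DecidableEq ι]
    {m : ι → ℤ} (h : ∑ i, m i * (m i - 1) = 0) :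
    ∃ S : Finset ι, ∀ i, m i = if i ∈ S then 1 else 0 := by
  have h01 := (Finset.sum_eq_zero_iff_of_nonneg fun i _ => Int.mul_sub_one_nonneg (m i)).mp h
  refine ⟨Finset.univ.filter (m · = 1), fun i => ?_⟩
  rcases mul_eq_zero.mp (h01 i (Finset.mem_univ i)) with h0 | h1
  · simp [h0]
  · simp [show m i = 1 by omega]

theorem exists_eq_neg_indicator_of_sum_mul_add_one_eq_zero {ι : Type*} [Fintype ι]
    [DecidableEq ι] {m : ι → ℤ} (h : ∑ i, m i * (m i + 1) = 0) :
    ∃ S : Finset ι, ∀ i, m i = if i ∈ S then -1 else 0 := by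
  obtain ⟨S, hS⟩ := exists_eq_indicator_of_sum_mul_sub_one_eq_zero (m := -m) <| by
    rw [← h]; congr 1; ext i; simp only [Pi.neg_apply]; ring
  refine ⟨S, fun i => ?_⟩
  have := hS i
  split_ifs at this ⊢ <;> simp only [Pi.neg_apply] at this <;> omega

theorem exists_line_eq_cons {d : ℤ} {m : Fin 6 → ℤ} (hdeg : 3 * d + ∑ i, m i = 1)
    (hself : ∑ i, m i ^ 2 = d ^ 2 + 1) : ∃ u, line u = Fin.cons d m := by
  have hd : d = 0 ∨ d = 1 ∨ d = 2 := by
    have hCS : (∑ i, m i) ^ 2 ≤ 6 * ∑ i, m i ^ 2 := by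
      simpa using sq_sum_le_card_mul_sum_sq (s := Finset.univ) (f := m)
    have : -1 < d ∧ d < 3 := by constructor <;> nlinarith
    omega
  have hsub : ∑ i, m i * (m i - 1) = d * (d + 3) := by
    simp only [mul_sub_one, Finset.sum_sub_distrib, ← sq, hself]
    linarith
  have hadd : ∑ i, m i * (m i + 1) = (d - 1) * (d - 2) := by
    simp only [mul_add_one, Finset.sum_add_distrib, ← sq, hself]
    linarith
  rcases hd with rfl | rfl | rfl
  · obtain ⟨S, hS⟩ := exists_eq_indicator_of_sum_mul_sub_one_eq_zero (by simpa using hsub)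
    have hcard : S.card = 1 := by
      have : ∑ i, m i = S.card := by simp [hS]
      omega
    obtain ⟨i, rfl⟩ := Finset.card_eq_one.mp hcard
    exact ⟨Sum.inl i, congrArg (Fin.cons 0) (funext fun j => by simp [hS])⟩
  · obtain ⟨S, hS⟩ := exists_eq_neg_indicator_of_sum_mul_add_one_eq_zero (by simpa using hadd)
    have hcard : S.card = 2 := by
      have : ∑ i, m i = -S.card := by simp [hS]
      omega
    exact ⟨Sum.inr (Sum.inr ⟨S, hcard⟩), congrArg (Fin.cons 1) (funext fun j => (hS j).symm)⟩
  · obtain ⟨S, hS⟩ := exists_eq_neg_indicator_of_sum_mul_add_one_eq_zero (by simpa using hadd)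
    have hcard : Sᶜ.card = 1 := by
      have : ∑ i, m i = -S.card := by simp [hS]
      rw [Finset.card_compl, Fintype.card_fin]
      omega
    obtain ⟨i, hi⟩ := Finset.card_eq_one.mp hcard
    have hS' (j : Fin 6) : j ∈ S ↔ j ≠ i := by
      rw [← Finset.notMem_compl, hi, Finset.mem_singleton]
    exact ⟨Sum.inr (Sum.inl i), congrArg (Fin.cons 2) (funext fun j => by simp [hS, hS'])⟩

theorem exists_line_eq_of_mem_Yset {y : L} (hy : y ∈ Yset) : ∃ u, line u = y := by
  rw [← Fin.cons_self_tail y, cons_mem_Yset_iff] at hy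
  rw [← Fin.cons_self_tail y]
  exact exists_line_eq_cons hy.1 hy.2

noncomputable def lineEquiv : VX ≃ Yset :=
  Equiv.ofBijective (fun u => ⟨line u, line_mem_Yset u⟩)
    ⟨fun _ _ h => line_injective (congrArg Subtype.val h),
      fun y => (exists_line_eq_of_mem_Yset y.2).imp fun _ h => Subtype.ext h⟩

theorem Ω_adj_lineEquiv (u v : VX) : Ω.Adj (lineEquiv u) (lineEquiv v) ↔ ΩX.Adj u v := by
  change lineEquiv u ≠ lineEquiv v ∧ B (line u) (line v) = 1 ↔ AdjX u v
  rw [lineEquiv.injective.ne_iff, B_line_line]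
  by_cases huv : u = v
  · subst huv
    simp only [ne_eq, not_true_eq_false, false_and, false_iff]
    exact ΩX.irrefl
  · split_ifs <;> simp_all

/-- The graph `Ω` of the 27 lines is isomorphic to Schläfli's combinatorial graph `Ω_X`. -/
theorem omega_iso_schlafli : Nonempty (Ω ≃g ΩX) :=
  ⟨(⟨lineEquiv, Ω_adj_lineEquiv _ _⟩ : ΩX ≃g Ω).symm⟩
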